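/- Let N ≥ 4, let W be a Weyl tensor on ℝ^N, let (k, n, m_2, …, m_{N−1}) be a null frame with first vector k, write ⟨k,x⟩ := η(k,x) and B(x,y) := W(x,k,k,y). Then the following necessary conditions hold: (a) if W has boost order ≤ 1 with respect to the frame, then ⟨k,u⟩⟨k,v⟩B(x,y) − ⟨k,u⟩⟨k,y⟩B(x,v) − ⟨k,x⟩⟨k,v⟩B(u,y) + ⟨k,x⟩⟨k,y⟩B(u,v) = 0 for all u,x,y,v; (b) if boost order ≤ 0, then B(x,y)⟨k,v⟩ − B(x,v)⟨k,y⟩ = 0 for all x,y,v; (c) if boost order ≤ −1, then W(x,y,k,w)⟨k,v⟩ − W(x,y,k,v)⟨k,w⟩ = 0 for all x,y,w,v; (d) if boost order ≤ −2, then W(x,y,k,w) = 0 for all x,y,w. -/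

import Mathlib

/-!
Expand the arguments of `W` in the null frame `(k, n, m_i)`. Since `η(k, x)` is the
`n`-coordinate of `x`, each identity says that `W(x,k,k,y)`, resp. `W(x,y,k,w)`, depends on the
free arguments only through their `n`-coordinates. Treating one argument at a time, this reduces
to the vanishing of frame components in which the slots filled by `k` (boost weight `+1`) meet
frame vectors other than `n` (weight `≥ 0`): their boost weight exceeds the boost order. The one
exception, a component `W(n,n,k,·)`, vanishes by antisymmetry.
-/

/-- The Minkowski symmetric bilinear form of signature `(-,+,…,+)` on `ℝ^N`. -/
def eta {N : ℕ} (x y : Fin N → ℝ) : ℝ :=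
  ∑ a : Fin N, (if (a : ℕ) = 0 then -(x a * y a) else x a * y a)

/-- A null frame `(ℓ, n, m_2, …, m_{N-1})` of `ℝ^N`: a basis consisting of two null
vectors `ℓ = f 0`, `n = f 1` with `η(ℓ,n) = 1` and spacelike vectors `m_i = f i`
(`2 ≤ i`) orthonormal and orthogonal to `ℓ` and `n`. -/
def IsNullFrame {N : ℕ} [NeZero N] (f : Fin N → Fin N → ℝ) : Prop :=
  LinearIndependent ℝ f ∧
  eta (f 0) (f 0) = 0 ∧ eta (f 1) (f 1) = 0 ∧ eta (f 0) (f 1) = 1 ∧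
  (∀ i j : Fin N, 2 ≤ (i : ℕ) → 2 ≤ (j : ℕ) →
      eta (f i) (f j) = if i = j then 1 else 0) ∧
  (∀ i : Fin N, 2 ≤ (i : ℕ) → eta (f 0) (f i) = 0 ∧ eta (f 1) (f i) = 0)

/-- A Weyl tensor on `ℝ^N`: a 4-linear form with the pair symmetries
`W(x,y,z,w) = -W(y,x,z,w) = W(z,w,x,y)`, the first Bianchi identity, and all
`η`-traces zero (the standard basis being `η`-orthonormal, the `η`-trace of
`(u,v) ↦ W(u,x,v,y)` is `∑ₐ η^{aa} W(eₐ,x,eₐ,y)` with `η^{00} = -1`, `η^{aa} = 1`). -/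
def IsWeyl {N : ℕ} (W : MultilinearMap ℝ (fun _ : Fin 4 => (Fin N → ℝ)) ℝ) : Prop :=
  (∀ x y z w : Fin N → ℝ, W ![y, x, z, w] = - W ![x, y, z, w]) ∧
  (∀ x y z w : Fin N → ℝ, W ![z, w, x, y] = W ![x, y, z, w]) ∧
  (∀ x y z w : Fin N → ℝ,
    W ![x, y, z, w] + W ![x, z, w, y] + W ![x, w, y, z] = 0) ∧
  (∀ x y : Fin N → ℝ,
    ∑ a : Fin N, (if (a : ℕ) = 0 then (-1 : ℝ) else 1) *
      W ![Pi.single a 1, x, Pi.single a 1, y] = 0)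

/-- Boost weight of a frame index: `b_0 = 1`, `b_1 = -1`, `b_i = 0` for spatial `i`. -/
def bw {N : ℕ} (A : Fin N) : ℤ :=
  if (A : ℕ) = 0 then 1 else if (A : ℕ) = 1 then -1 else 0

open Module

section Basis

variable {ι κ R M P : Type*} [CommSemiring R] [AddCommMonoid M] [Module R M]
  [AddCommMonoid P] [Module R P] [Fintype κ]

theorem MultilinearMap.map_eq_zero_of_forall_basis [Fintype ι] [DecidableEq ι] (b : Basis κ R M)
    (W : MultilinearMap R (fun _ : ι => M) P) (x : ι → M)
    (h : ∀ r : ι → κ, (∀ i, b.repr (x i) (r i) ≠ 0) → W (fun i => b (r i)) = 0) :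
    W x = 0 := by
  have hx : x = fun i => ∑ j, b.repr (x i) j • b j := funext fun i => (b.sum_repr (x i)).symm
  rw [hx, W.map_sum]
  refine Finset.sum_eq_zero fun r _ => ?_
  rw [W.map_smul_univ]
  by_cases hr : ∀ i, b.repr (x i) (r i) ≠ 0
  · rw [h r hr, smul_zero]
  · obtain ⟨i, hi⟩ := not_forall_not.mp hr
    rw [Finset.prod_eq_zero (Finset.mem_univ i) hi, zero_smul]

theorem Module.Basis.map_eq_repr_smul_of_forall_ne (b : Basis κ R M) (L : M →ₗ[R] P) {i : κ}
    (h : ∀ j ≠ i, L (b j) = 0) (v : M) : L v = b.repr v i • L (b i) := by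
  conv_lhs => rw [← b.sum_repr v]
  rw [map_sum, Finset.sum_eq_single i (fun j _ hj => by rw [map_smul, h j hj, smul_zero])
    (fun hi => absurd (Finset.mem_univ i) hi), map_smul]

end Basis

section VecFour

variable {R M P : Type*} [Semiring R] [AddCommMonoid M] [Module R M] [AddCommMonoid P] [Module R P]
  (W : MultilinearMap R (fun _ : Fin 4 => M) P) (x y z w v : M)

theorem MultilinearMap.toLinearMap_vecFour_zero :
    W.toLinearMap ![x, y, z, w] 0 v = W ![v, y, z, w] :=
  congrArg W <| funext fun i => by fin_cases i <;> rfl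

theorem MultilinearMap.toLinearMap_vecFour_three :
    W.toLinearMap ![x, y, z, w] 3 v = W ![x, y, z, v] :=
  congrArg W <| funext fun i => by fin_cases i <;> rfl

end VecFour

def etaRight {N : ℕ} (v : Fin N → ℝ) : (Fin N → ℝ) →ₗ[ℝ] ℝ where
  toFun := eta v
  map_add' x y := by
    simp only [eta, Pi.add_apply, ← Finset.sum_add_distrib]
    exact Finset.sum_congr rfl fun a _ => by split_ifs <;> ring
  map_smul' c x := by
    simp only [eta, Pi.smul_apply, smul_eq_mul, RingHom.id_apply, Finset.mul_sum]
    exact Finset.sum_congr rfl fun a _ => by split_ifs <;> ring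

theorem neg_one_le_bw {N : ℕ} (A : Fin N) : -1 ≤ bw A := by
  unfold bw; split_ifs <;> omega

theorem bw_zero {N : ℕ} [NeZero N] : bw (0 : Fin N) = 1 := rfl

def HasBoostOrderLE {N : ℕ} (W : MultilinearMap ℝ (fun _ : Fin 4 => (Fin N → ℝ)) ℝ)
    (f : Fin N → Fin N → ℝ) (b : ℤ) : Prop :=
  ∀ A : Fin 4 → Fin N, b < ∑ k, bw (A k) → W (fun k => f (A k)) = 0

section Frame

variable {N : ℕ} {W : MultilinearMap ℝ (fun _ : Fin 4 => (Fin N → ℝ)) ℝ}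
  {f : Fin N → Fin N → ℝ}

theorem IsWeyl.map_eq_zero_of_eq (hW : IsWeyl W) {m : Fin 4 → Fin N → ℝ} (h : m 0 = m 1) :
    W m = 0 := by
  have hm : m = ![m 0, m 1, m 2, m 3] := funext fun i => by fin_cases i <;> rfl
  have hanti := hW.1 (m 0) (m 1) (m 2) (m 3)
  rw [h] at hanti
  rw [hm, h]
  linarith

theorem HasBoostOrderLE.map_frame_eq_zero {b : ℤ} (hB : HasBoostOrderLE W f b)
    (r : Fin 4 → Fin N) (h : b < bw (r 0) + bw (r 1) + bw (r 2) + bw (r 3)) :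
    W (fun k => f (r k)) = 0 :=
  hB r (by rwa [Fin.sum_univ_four])

theorem HasBoostOrderLE.map_vecFour_eq_zero {b : ℤ} (hB : HasBoostOrderLE W f b)
    {i j k l : Fin N} (h : b < bw i + bw j + bw k + bw l) : W ![f i, f j, f k, f l] = 0 := by
  have hr : ![f i, f j, f k, f l] = fun n => f (![i, j, k, l] n) :=
    funext fun n => by fin_cases n <;> rfl
  rw [hr]
  exact hB.map_frame_eq_zero _ h

end Frame

namespace IsNullFrame

variable {N : ℕ} [NeZero N] {f : Fin N → Fin N → ℝ} (hf : IsNullFrame f)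
  {W : MultilinearMap ℝ (fun _ : Fin 4 => (Fin N → ℝ)) ℝ}
include hf

theorem one_lt : 1 < N := by
  by_contra hN
  obtain rfl : N = 1 := by have := NeZero.ne N; omega
  -- in `Fin 1` the vectors `f 0` and `f 1` coincide, but `η(f 0, f 0) = 0 ≠ 1 = η(f 0, f 1)`
  have h01 := hf.2.2.2.1
  rw [show (1 : Fin 1) = 0 from rfl, hf.2.1] at h01
  exact zero_ne_one h01

theorem val_one : ((1 : Fin N) : ℕ) = 1 := by
  rw [Fin.val_one', Nat.mod_eq_of_lt hf.one_lt]

theorem bw_one : bw (1 : Fin N) = -1 := by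
  rw [bw, hf.val_one]
  rfl

theorem bw_nonneg {A : Fin N} (hA : A ≠ 1) : 0 ≤ bw A := by
  unfold bw
  split_ifs with h0 h1
  · omega
  · exact absurd (Fin.ext (h1.trans hf.val_one.symm)) hA
  · rfl

noncomputable def basis : Basis (Fin N) ℝ (Fin N → ℝ) :=
  basisOfLinearIndependentOfCardEqFinrank hf.1 (by simp)

theorem coe_basis : ⇑hf.basis = f :=
  coe_basisOfLinearIndependentOfCardEqFinrank _ _

theorem eq_of_basis_repr_ne_zero {A B : Fin N} (h : hf.basis.repr (f A) B ≠ 0) : B = A := by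
  have hA : f A = hf.basis A := by rw [hf.coe_basis]
  rw [hA, hf.basis.repr_self] at h
  exact (Finsupp.single_apply_ne_zero.mp h).1

theorem eta_first_eq_zero {A : Fin N} (hA : A ≠ 1) : eta (f 0) (f A) = 0 := by
  rcases Nat.lt_or_ge (A : ℕ) 2 with h | h
  · have hA1 : (A : ℕ) ≠ 1 := fun h1 => hA (Fin.ext (h1.trans hf.val_one.symm))
    obtain rfl : A = 0 := Fin.ext (by rw [Fin.val_zero]; omega)
    exact hf.2.1
  · exact (hf.2.2.2.2.2 A h).1

theorem eta_first_eq_repr (x : Fin N → ℝ) : eta (f 0) x = hf.basis.repr x 1 := by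
  have := hf.basis.map_eq_repr_smul_of_forall_ne (etaRight (f 0)) (i := 1)
    (fun j hj => by rw [hf.coe_basis]; exact hf.eta_first_eq_zero hj) x
  rwa [hf.coe_basis, etaRight, LinearMap.coe_mk, AddHom.coe_mk, hf.2.2.2.1, smul_eq_mul,
    mul_one] at this

theorem map_vecFour_zero_eq {y z w : Fin N → ℝ} (h : ∀ j ≠ 1, W ![f j, y, z, w] = 0)
    (x : Fin N → ℝ) : W ![x, y, z, w] = eta (f 0) x * W ![f 1, y, z, w] := by
  have := hf.basis.map_eq_repr_smul_of_forall_ne (W.toLinearMap ![0, y, z, w] 0) (i := 1)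
    (by simpa only [hf.coe_basis, W.toLinearMap_vecFour_zero] using h) x
  rwa [W.toLinearMap_vecFour_zero, W.toLinearMap_vecFour_zero, hf.coe_basis,
    ← hf.eta_first_eq_repr, smul_eq_mul] at this

theorem map_vecFour_three_eq {x y z : Fin N → ℝ} (h : ∀ j ≠ 1, W ![x, y, z, f j] = 0)
    (w : Fin N → ℝ) : W ![x, y, z, w] = eta (f 0) w * W ![x, y, z, f 1] := by
  have := hf.basis.map_eq_repr_smul_of_forall_ne (W.toLinearMap ![x, y, z, 0] 3) (i := 1)
    (by simpa only [hf.coe_basis, W.toLinearMap_vecFour_three] using h) w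
  rwa [W.toLinearMap_vecFour_three, W.toLinearMap_vecFour_three, hf.coe_basis,
    ← hf.eta_first_eq_repr, smul_eq_mul] at this

theorem map_first_first_eq_of_boostOrder_le_one (hB : HasBoostOrderLE W f 1) (x y : Fin N → ℝ) :
    W ![x, f 0, f 0, y] = eta (f 0) x * W ![f 1, f 0, f 0, y] + eta (f 0) y * W ![x, f 0, f 0, f 1]
      - eta (f 0) x * eta (f 0) y * W ![f 1, f 0, f 0, f 1] := by
  have hrow : ∀ i ≠ 1, ∀ y, W ![f i, f 0, f 0, y] = eta (f 0) y * W ![f i, f 0, f 0, f 1] :=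
    fun i hi => hf.map_vecFour_three_eq fun j hj => hB.map_vecFour_eq_zero (by
      have := hf.bw_nonneg hi; have := hf.bw_nonneg hj; rw [bw_zero]; omega)
  -- `x ↦ W(x,k,k,y) - ⟨k,y⟩ W(x,k,k,n)` vanishes on the frame vectors other than `n`
  set L := W.toLinearMap ![0, f 0, f 0, y] 0 - eta (f 0) y • W.toLinearMap ![0, f 0, f 0, f 1] 0
  have hL := hf.basis.map_eq_repr_smul_of_forall_ne L (i := 1) (fun j hj => by
    simp only [L, LinearMap.sub_apply, LinearMap.smul_apply, W.toLinearMap_vecFour_zero,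
      hf.coe_basis, smul_eq_mul]
    rw [hrow j hj y, sub_self]) x
  simp only [L, LinearMap.sub_apply, LinearMap.smul_apply, W.toLinearMap_vecFour_zero,
    hf.coe_basis, ← hf.eta_first_eq_repr, smul_eq_mul] at hL
  linear_combination hL

theorem map_first_first_eq_of_boostOrder_le_zero (hB : HasBoostOrderLE W f 0)
    (x y : Fin N → ℝ) :
    W ![x, f 0, f 0, y] = eta (f 0) x * eta (f 0) y * W ![f 1, f 0, f 0, f 1] := by
  have hrow : ∀ i y, W ![f i, f 0, f 0, y] = eta (f 0) y * W ![f i, f 0, f 0, f 1] :=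
    fun i => hf.map_vecFour_three_eq fun j hj => hB.map_vecFour_eq_zero (by
      have := neg_one_le_bw i; have := hf.bw_nonneg hj; rw [bw_zero]; omega)
  rw [hf.map_vecFour_zero_eq (fun j hj => ?_) x, hrow 1 y]
  · ring
  · have := hf.bw_nonneg hj
    rw [hrow j, hB.map_vecFour_eq_zero (by rw [bw_zero, hf.bw_one]; omega), mul_zero]

theorem map_third_eq_zero (hW : IsWeyl W) {b : ℤ} (hB : HasBoostOrderLE W f b)
    (x y w : Fin N → ℝ) (hw : ∀ j, hf.basis.repr w j ≠ 0 → b < bw j) :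
    W ![x, y, f 0, w] = 0 := by
  refine W.map_eq_zero_of_forall_basis hf.basis _ fun r hr => ?_
  have h2 : r 2 = 0 := hf.eq_of_basis_repr_ne_zero (hr 2)
  have h3 : b < bw (r 3) := hw _ (hr 3)
  rw [hf.coe_basis]
  by_cases h01 : r 0 = 1 ∧ r 1 = 1
  · exact hW.map_eq_zero_of_eq (by simp only [h01.1, h01.2])
  · -- a pair `(r 0, r 1) ≠ (1, 1)` has weight `≥ -1`, compensated by `bw (r 2) = 1`
    refine hB.map_frame_eq_zero r ?_
    have := neg_one_le_bw (r 0); have := neg_one_le_bw (r 1)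
    by_cases h0 : r 0 = 1
    · have := hf.bw_nonneg fun h1 => h01 ⟨h0, h1⟩
      rw [h2, bw_zero]; omega
    · have := hf.bw_nonneg h0
      rw [h2, bw_zero]; omega

theorem map_third_eq_of_boostOrder_le_neg_one (hW : IsWeyl W) (hB : HasBoostOrderLE W f (-1))
    (x y w : Fin N → ℝ) : W ![x, y, f 0, w] = eta (f 0) w * W ![x, y, f 0, f 1] :=
  hf.map_vecFour_three_eq (fun j hj => hf.map_third_eq_zero hW hB x y (f j) fun l hl => by
    rw [hf.eq_of_basis_repr_ne_zero hl]; have := hf.bw_nonneg hj; omega) w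

theorem map_third_eq_zero_of_boostOrder_le_neg_two (hW : IsWeyl W) (hB : HasBoostOrderLE W f (-2))
    (x y w : Fin N → ℝ) : W ![x, y, f 0, w] = 0 :=
  hf.map_third_eq_zero hW hB x y w fun j _ => by have := neg_one_le_bw j; omega

end IsNullFrame

theorem stmt_14_general (N : ℕ) [NeZero N]
    (W : MultilinearMap ℝ (fun _ : Fin 4 => (Fin N → ℝ)) ℝ) (hW : IsWeyl W)
    (f : Fin N → Fin N → ℝ) (hf : IsNullFrame f) :
    ((∀ A : Fin 4 → Fin N, (1 : ℤ) < ∑ k, bw (A k) → W (fun k => f (A k)) = 0) →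
      ∀ u x y v : Fin N → ℝ,
        eta (f 0) u * eta (f 0) v * W ![x, f 0, f 0, y]
          - eta (f 0) u * eta (f 0) y * W ![x, f 0, f 0, v]
          - eta (f 0) x * eta (f 0) v * W ![u, f 0, f 0, y]
          + eta (f 0) x * eta (f 0) y * W ![u, f 0, f 0, v] = 0) ∧
    ((∀ A : Fin 4 → Fin N, (0 : ℤ) < ∑ k, bw (A k) → W (fun k => f (A k)) = 0) →
      ∀ x y v : Fin N → ℝ,
        W ![x, f 0, f 0, y] * eta (f 0) v - W ![x, f 0, f 0, v] * eta (f 0) y = 0) ∧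
    ((∀ A : Fin 4 → Fin N, (-1 : ℤ) < ∑ k, bw (A k) → W (fun k => f (A k)) = 0) →
      ∀ x y w v : Fin N → ℝ,
        W ![x, y, f 0, w] * eta (f 0) v - W ![x, y, f 0, v] * eta (f 0) w = 0) ∧
    ((∀ A : Fin 4 → Fin N, (-2 : ℤ) < ∑ k, bw (A k) → W (fun k => f (A k)) = 0) →
      ∀ x y w : Fin N → ℝ, W ![x, y, f 0, w] = 0) := by
  refine ⟨fun hB u x y v => ?_, fun hB x y v => ?_, fun hB x y w v => ?_,
    hf.map_third_eq_zero_of_boostOrder_le_neg_two hW⟩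
  · have hA := hf.map_first_first_eq_of_boostOrder_le_one hB
    rw [hA x y, hA x v, hA u y, hA u v]
    ring
  · have hB' := hf.map_first_first_eq_of_boostOrder_le_zero hB
    rw [hB' x y, hB' x v]
    ring
  · have hC := hf.map_third_eq_of_boostOrder_le_neg_one hW hB x y
    rw [hC w, hC v]
    ring

/-- Necessary conditions for alignment of the null vector `k = f 0`
(the first vector of a null frame), with `⟨k,x⟩ = η(k,x)` and `B(x,y) = W(x,k,k,y)`:
(a) boost order `≤ 1` (type **I**) implies the quartic alignment identity;
(b) boost order `≤ 0` (type **II**) implies `B(x,y)⟨k,v⟩ - B(x,v)⟨k,y⟩ = 0`;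
(c) boost order `≤ -1` (type **III**) implies `W(x,y,k,w)⟨k,v⟩ - W(x,y,k,v)⟨k,w⟩ = 0`;
(d) boost order `≤ -2` (type **N**) implies `W(x,y,k,w) = 0`. -/
theorem stmt_14 (N : ℕ) [NeZero N] (hN : 4 ≤ N)
    (W : MultilinearMap ℝ (fun _ : Fin 4 => (Fin N → ℝ)) ℝ) (hW : IsWeyl W)
    (f : Fin N → Fin N → ℝ) (hf : IsNullFrame f) :
    ((∀ A : Fin 4 → Fin N, (1 : ℤ) < ∑ k, bw (A k) → W (fun k => f (A k)) = 0) →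
      ∀ u x y v : Fin N → ℝ,
        eta (f 0) u * eta (f 0) v * W ![x, f 0, f 0, y]
          - eta (f 0) u * eta (f 0) y * W ![x, f 0, f 0, v]
          - eta (f 0) x * eta (f 0) v * W ![u, f 0, f 0, y]
          + eta (f 0) x * eta (f 0) y * W ![u, f 0, f 0, v] = 0) ∧
    ((∀ A : Fin 4 → Fin N, (0 : ℤ) < ∑ k, bw (A k) → W (fun k => f (A k)) = 0) →
      ∀ x y v : Fin N → ℝ,
        W ![x, f 0, f 0, y] * eta (f 0) v - W ![x, f 0, f 0, v] * eta (f 0) y = 0) ∧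
    ((∀ A : Fin 4 → Fin N, (-1 : ℤ) < ∑ k, bw (A k) → W (fun k => f (A k)) = 0) →
      ∀ x y w v : Fin N → ℝ,
        W ![x, y, f 0, w] * eta (f 0) v - W ![x, y, f 0, v] * eta (f 0) w = 0) ∧
    ((∀ A : Fin 4 → Fin N, (-2 : ℤ) < ∑ k, bw (A k) → W (fun k => f (A k)) = 0) →
      ∀ x y w : Fin N → ℝ, W ![x, y, f 0, w] = 0) :=
  stmt_14_general N W hW f hf
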